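/- Assume Condition (C) holds with witness X_S. Then the sequences (A^(k), B^(k), Q^(k)) are well defined (in particular Q^(1) − B^(k) is positive definite for every k), and for every k ≥ 1: Q ≥ Q^(k) ≥ Q^(k+1) ≥ X_S > B^(k+1) ≥ B^(k) ≥ 0 in the Loewner order. Moreover, for every k ≥ 1, Q^(k) ≥ Q − A^H f(Q^(k))^{-1} A. -/

import Mathlib

/-! The map `g X = Q - Aᴴ f(X)⁻¹ A` is monotone on positive definite matrices, because an
admissible `f` is a monotone ring automorphism commuting with `ᴴ` and `⁻¹`. Hence its orbit from
`Q` decreases and stays above `X_S`. By the Woodbury identity, `g ∘ g` is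
`X ↦ Q⁽¹⁾ - A⁽¹⁾ᴴ (X - B⁽¹⁾)⁻¹ A⁽¹⁾`, and telescoping the recursion with the same identity gives
`Q⁽ᵏ⁾ = g^(2k-1) Q`. On the other side, Woodbury rewrites `B⁽ᵏ⁺¹⁾` as
`f(A) (f(Q) - A (Q - B⁽ᵏ⁾)⁻¹ Aᴴ)⁻¹ f(A)ᴴ`; two Schur complement steps, one using condition (C)
and one using its image under `f`, keep it strictly below `X_S`, and `B⁽ᵏ⁾` increases because
inversion is antitone. -/


open Matrix Filter Topology
open scoped ComplexOrder

noncomputable section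

/-- Square complex matrices of size `n`. -/
abbrev Mat (n : ℕ) := Matrix (Fin n) (Fin n) ℂ

/-- An operator `f` on complex `n × n` matrices is *admissible* if it satisfies
(a1) `f (f X) = X`, (a2) additivity, (a3) multiplicativity, and
(a4) `f X` is positive semidefinite whenever `X` is. -/
def Admissible {n : ℕ} (f : Mat n → Mat n) : Prop :=
  (∀ X, f (f X) = X) ∧
  (∀ X Y, f (X + Y) = f X + f Y) ∧
  (∀ X Y, f (X * Y) = f X * f Y) ∧
  (∀ X, X.PosSemidef → (f X).PosSemidef)

/-- The general recursion of the paper: with constant matrices `(Ac, Bc, Qc)` and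
initial triple `init = (A⁽¹⁾, B⁽¹⁾, Q⁽¹⁾)`, step
`(A, B, Q) ↦ (Ac (Qc - B)⁻¹ A, Bc + Ac (Qc - B)⁻¹ Acᴴ, Q - Aᴴ (Qc - B)⁻¹ A)`.
Index `k : ℕ` corresponds to the paper's index `k + 1`. -/
def nmeIter {n : ℕ} (Ac Bc Qc : Mat n) (init : Mat n × Mat n × Mat n) :
    ℕ → Mat n × Mat n × Mat n
  | 0 => init
  | k + 1 =>
    let p := nmeIter Ac Bc Qc init k
    (Ac * (Qc - p.2.1)⁻¹ * p.1,
     Bc + Ac * (Qc - p.2.1)⁻¹ * Acᴴ,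
     p.2.2 - p.1ᴴ * (Qc - p.2.1)⁻¹ * p.1)

/-- The sequence `(A⁽ᵏ⁾, B⁽ᵏ⁾, Q⁽ᵏ⁾)` (indexed from `0`, so `plusSeq f A Q k` is the
paper's `(A^{(k+1)}, B^{(k+1)}, Q^{(k+1)})`) for the plus-sign equation
`X + Aᴴ f(X)⁻¹ A = Q`. -/
def plusSeq {n : ℕ} (f : Mat n → Mat n) (A Q : Mat n) : ℕ → Mat n × Mat n × Mat n :=
  nmeIter (f A * (f Q)⁻¹ * A) (f A * (f Q)⁻¹ * (f A)ᴴ) (Q - Aᴴ * (f Q)⁻¹ * A)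
    (f A * (f Q)⁻¹ * A, f A * (f Q)⁻¹ * (f A)ᴴ, Q - Aᴴ * (f Q)⁻¹ * A)

/-- `As f A Q k` is the paper's `A^{(k+1)}`. -/
def As {n : ℕ} (f : Mat n → Mat n) (A Q : Mat n) (k : ℕ) : Mat n := (plusSeq f A Q k).1
/-- `Bs f A Q k` is the paper's `B^{(k+1)}`. -/
def Bs {n : ℕ} (f : Mat n → Mat n) (A Q : Mat n) (k : ℕ) : Mat n := (plusSeq f A Q k).2.1
/-- `Qs f A Q k` is the paper's `Q^{(k+1)}`. -/
def Qs {n : ℕ} (f : Mat n → Mat n) (A Q : Mat n) (k : ℕ) : Mat n := (plusSeq f A Q k).2.2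

open scoped MatrixOrder ComplexStarModule

namespace Matrix

lemma sub_mul_inv_mul_inv_eq_add {m K : Type*} [Fintype m] [DecidableEq m] [Field K]
    {L D U V : Matrix m m K} (hL : IsUnit L) (hD : IsUnit D) (hS : IsUnit (D - V * L⁻¹ * U)) :
    (L - U * D⁻¹ * V)⁻¹ = L⁻¹ + L⁻¹ * U * (D - V * L⁻¹ * U)⁻¹ * V * L⁻¹ := by
  have hDD : D⁻¹⁻¹ = D := nonsing_inv_nonsing_inv D ((isUnit_iff_isUnit_det D).mp hD)
  have h := add_mul_mul_inv_eq_sub L (-U) D⁻¹ V hL (isUnit_nonsing_inv_iff.mpr hD)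
    (by rw [hDD, mul_neg, ← sub_eq_add_neg]; exact hS)
  simpa only [hDD, neg_mul, mul_neg, ← sub_eq_add_neg, sub_neg_eq_add] using h

variable {m 𝕜 : Type*} [RCLike 𝕜]

lemma PosDef.of_le {X Y : Matrix m m 𝕜} (hX : X.PosDef) (h : X ≤ Y) : Y.PosDef := by
  simpa using PosDef.posSemidef_add (le_iff.mp h) hX

lemma PosDef.sub_of_le {X Y B : Matrix m m 𝕜} (h : (X - B).PosDef) (hXY : X ≤ Y) :
    (Y - B).PosDef := by
  simpa using PosDef.posSemidef_add (le_iff.mp hXY) h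

variable [Fintype m] [DecidableEq m]

lemma PosDef.sub_mul_inv_mul_conjTranspose {X S B : Matrix m m 𝕜} (hX : X.PosDef)
    (hS : S.PosDef) (h : (S - Bᴴ * X⁻¹ * B).PosDef) : (X - B * S⁻¹ * Bᴴ).PosDef := by
  have := hX.isUnit.invertible
  have := hS.isUnit.invertible
  have hblock : (fromBlocks X B Bᴴ S).PosSemidef :=
    (PosDef.fromBlocks₁₁ B S hX).mpr h.posSemidef
  refine ((PosDef.fromBlocks₂₂ X B hS).mp hblock).posDef_iff_isUnit.mpr ?_
  have hdet := det_fromBlocks₂₂ X B Bᴴ S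
  rw [det_fromBlocks₁₁, invOf_eq_nonsing_inv, invOf_eq_nonsing_inv] at hdet
  have hunit : IsUnit (S.det * (X - B * S⁻¹ * Bᴴ).det) := by
    rw [← hdet]
    exact ((isUnit_iff_isUnit_det _).mp hX.isUnit).mul ((isUnit_iff_isUnit_det _).mp h.isUnit)
  exact (isUnit_iff_isUnit_det _).mpr (isUnit_of_mul_isUnit_right hunit)

open scoped Matrix.Norms.L2Operator in
lemma inv_le_inv_of_le {X Y : Matrix m m ℂ} (hX : X.PosDef) (h : X ≤ Y) : Y⁻¹ ≤ X⁻¹ := by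
  simpa only [nonsing_inv_eq_ringInverse] using
    CStarAlgebra.ringInverse_le_ringInverse h hX.isStrictlyPositive

end Matrix

lemma Complex.star_eq_neg_of_mul_self_eq_neg_one {r : ℂ} (h : r * r = -1) : star r = -r := by
  rcases mul_self_eq_mul_self_iff.mp (h.trans I_mul_I.symm) with rfl | rfl <;> simp

namespace Admissible

variable {n : ℕ} {f : Mat n → Mat n}

def ringEquiv (hf : Admissible f) : Mat n ≃+* Mat n where
  toFun := f
  invFun := f
  left_inv := hf.1
  right_inv := hf.1
  map_mul' := hf.2.2.1
  map_add' := hf.2.1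

lemma map_sub (hf : Admissible f) (X Y : Mat n) : f (X - Y) = f X - f Y :=
  _root_.map_sub hf.ringEquiv X Y

lemma map_neg (hf : Admissible f) (X : Mat n) : f (-X) = -f X :=
  _root_.map_neg hf.ringEquiv X

lemma map_one (hf : Admissible f) : f 1 = 1 :=
  _root_.map_one hf.ringEquiv

lemma monotone (hf : Admissible f) : Monotone f := fun X Y h => by
  rw [le_iff, ← hf.map_sub]
  exact hf.2.2.2 _ h

lemma map_inv (hf : Admissible f) (X : Mat n) : f X⁻¹ = (f X)⁻¹ := by
  by_cases hX : IsUnit X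
  · refine (inv_eq_right_inv ?_).symm
    rw [← hf.2.2.1, mul_nonsing_inv X ((isUnit_iff_isUnit_det X).mp hX)]
    exact hf.map_one
  · have hfX : ¬IsUnit (f X) := (MulEquiv.isUnit_map hf.ringEquiv).not.mpr hX
    simp only [nonsing_inv_eq_ringInverse, Ring.inverse_non_unit _ hX,
      Ring.inverse_non_unit _ hfX]
    exact map_zero hf.ringEquiv

lemma posDef (hf : Admissible f) {X : Mat n} (hX : X.PosDef) : (f X).PosDef :=
  (hf.2.2.2 _ hX.posSemidef).posDef_iff_isUnit.mpr
    ((MulEquiv.isUnit_map hf.ringEquiv).mpr hX.isUnit)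

lemma isHermitian (hf : Admissible f) {X : Mat n} (hX : X.IsHermitian) : (f X).IsHermitian := by
  rw [← CFC.posPart_sub_negPart X hX.isSelfAdjoint, hf.map_sub]
  exact (hf.2.2.2 _ (CFC.posPart_nonneg X).posSemidef).isHermitian.sub
    (hf.2.2.2 _ (CFC.negPart_nonneg X).posSemidef).isHermitian

lemma exists_map_I_smul (hf : Admissible f) :
    ∃ r : ℂ, star r = -r ∧ ∀ Y, f (Complex.I • Y) = r • f Y := by
  rcases isEmpty_or_nonempty (Fin n) with hn | ⟨⟨i⟩⟩
  · exact ⟨Complex.I, by simp, fun _ => Subsingleton.elim _ _⟩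
  -- `f (I • 1)` commutes with everything because `f` is onto, so it is a scalar `r • 1`.
  set J := f (Complex.I • 1)
  have hmul : ∀ Y, f (Complex.I • Y) = J * f Y := fun Y => by
    rw [← hf.2.2.1, smul_one_mul]
  have hcentral : ∀ Z, Commute Z J := fun Z => by
    rw [← hf.1 Z]
    change f (f Z) * J = J * f (f Z)
    rw [← hmul, ← hf.2.2.1, mul_smul_comm, mul_one]
  obtain ⟨r, hr⟩ := mem_range_scalar_of_commute_single fun _ _ _ => hcentral _
  have hJ : J = r • 1 := by rw [← hr, scalar_apply, smul_one_eq_diagonal]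
  refine ⟨r, Complex.star_eq_neg_of_mul_self_eq_neg_one ?_, fun Y => by
    rw [hmul, hJ, smul_one_mul]⟩
  have hJJ : J * J = -1 := by
    rw [← hmul, smul_smul, Complex.I_mul_I, neg_one_smul, hf.map_neg, hf.map_one]
  rw [hJ, smul_one_mul, smul_smul] at hJJ
  simpa using congrFun (congrFun hJJ i) i

lemma map_conjTranspose (hf : Admissible f) (X : Mat n) : f Xᴴ = (f X)ᴴ := by
  obtain ⟨r, hr, hI⟩ := hf.exists_map_I_smul
  obtain ⟨H, K, hH, hK, rfl⟩ :
      ∃ H K : Mat n, H.IsHermitian ∧ K.IsHermitian ∧ X = H + Complex.I • K :=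
    ⟨ℜ X, ℑ X, (ℜ X).2, (ℑ X).2, (realPart_add_I_smul_imaginaryPart X).symm⟩
  rw [conjTranspose_add, conjTranspose_smul, hH.eq, hK.eq, Complex.star_def, Complex.conj_I,
    neg_smul, hf.2.1, hf.2.1, hf.map_neg, hI, conjTranspose_add, conjTranspose_smul,
    (hf.isHermitian hH).eq, (hf.isHermitian hK).eq, hr, neg_smul]

end Admissible

def plusMap {n : ℕ} (f : Mat n → Mat n) (A Q X : Mat n) : Mat n := Q - Aᴴ * (f X)⁻¹ * A

section PlusMap

variable {n : ℕ} {f : Mat n → Mat n} {A Q XS : Mat n}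

lemma plusMap_le (hf : Admissible f) {X : Mat n} (hX : X.PosDef) : plusMap f A Q X ≤ Q :=
  sub_le_self Q (star_left_conjugate_nonneg (hf.posDef hX).inv.posSemidef.nonneg A)

lemma plusMap_mono (hf : Admissible f) {X Y : Mat n} (hY : Y.PosDef) (h : Y ≤ X) :
    plusMap f A Q Y ≤ plusMap f A Q X :=
  sub_le_sub_left (star_left_conjugate_le_conjugate
    (inv_le_inv_of_le (hf.posDef hY) (hf.monotone h)) A) Q

lemma map_plusMap (hf : Admissible f) (X : Mat n) :
    f (plusMap f A Q X) = f Q - (f A)ᴴ * X⁻¹ * f A := by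
  rw [plusMap, hf.map_sub, hf.2.2.1, hf.2.2.1, hf.map_conjTranspose, hf.map_inv, hf.1]

lemma map_le_of_le_plusMap (hf : Admissible f) (hC : XS ≤ plusMap f A Q XS) :
    f XS ≤ f Q - (f A)ᴴ * XS⁻¹ * f A :=
  map_plusMap (Q := Q) hf XS ▸ hf.monotone hC

lemma le_of_le_plusMap (hf : Admissible f) (hXS : XS.PosDef) (hC : XS ≤ plusMap f A Q XS) :
    XS ≤ Q :=
  hC.trans (plusMap_le hf hXS)

lemma le_iterate_plusMap (hf : Admissible f) (hXS : XS.PosDef) (hC : XS ≤ plusMap f A Q XS)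
    (k : ℕ) : XS ≤ (plusMap f A Q)^[k] Q := by
  induction k with
  | zero => exact le_of_le_plusMap hf hXS hC
  | succ k ih =>
    rw [Function.iterate_succ_apply']
    exact hC.trans (plusMap_mono hf hXS ih)

lemma antitone_iterate_plusMap (hf : Admissible f) (hXS : XS.PosDef)
    (hC : XS ≤ plusMap f A Q XS) : Antitone fun k => (plusMap f A Q)^[k] Q := by
  refine antitone_nat_of_succ_le fun k => ?_
  induction k with
  | zero => exact plusMap_le hf (hXS.of_le (le_of_le_plusMap hf hXS hC))
  | succ k ih =>
    have hpos := hXS.of_le (le_iterate_plusMap hf hXS hC (k + 1))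
    calc (plusMap f A Q)^[k + 2] Q = plusMap f A Q ((plusMap f A Q)^[k + 1] Q) :=
          Function.iterate_succ_apply' ..
      _ ≤ plusMap f A Q ((plusMap f A Q)^[k] Q) := plusMap_mono hf hpos ih
      _ = (plusMap f A Q)^[k + 1] Q := (Function.iterate_succ_apply' ..).symm

end PlusMap

section Sequences

variable {n : ℕ} {f : Mat n → Mat n} {A Q XS : Mat n}

lemma As_zero : As f A Q 0 = f A * (f Q)⁻¹ * A := rfl

lemma Bs_zero : Bs f A Q 0 = f A * (f Q)⁻¹ * (f A)ᴴ := rfl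

lemma Qs_zero : Qs f A Q 0 = plusMap f A Q Q := rfl

lemma As_succ (k : ℕ) :
    As f A Q (k + 1) = As f A Q 0 * (Qs f A Q 0 - Bs f A Q k)⁻¹ * As f A Q k := rfl

lemma Bs_succ (k : ℕ) :
    Bs f A Q (k + 1) = Bs f A Q 0 + As f A Q 0 * (Qs f A Q 0 - Bs f A Q k)⁻¹ * (As f A Q 0)ᴴ :=
  rfl

lemma Qs_succ (k : ℕ) :
    Qs f A Q (k + 1) = Qs f A Q k - (As f A Q k)ᴴ * (Qs f A Q 0 - Bs f A Q k)⁻¹ * As f A Q k :=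
  rfl

lemma conjTranspose_As_zero (hf : Admissible f) (hQ : Q.PosDef) :
    (As f A Q 0)ᴴ = Aᴴ * (f Q)⁻¹ * (f A)ᴴ := by
  rw [As_zero, conjTranspose_mul, conjTranspose_mul, (hf.posDef hQ).inv.isHermitian, ← mul_assoc]

lemma plusMap_plusMap (hf : Admissible f) (hQ : Q.PosDef) {X : Mat n} (hX : X.PosDef)
    (hXB : (X - Bs f A Q 0).PosDef) :
    plusMap f A Q (plusMap f A Q X)
      = Qs f A Q 0 - (As f A Q 0)ᴴ * (X - Bs f A Q 0)⁻¹ * As f A Q 0 := by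
  have hinv := sub_mul_inv_mul_inv_eq_add (hf.posDef hQ).isUnit hX.isUnit
    (U := (f A)ᴴ) (V := f A) hXB.isUnit
  rw [plusMap, map_plusMap hf, hinv, conjTranspose_As_zero hf hQ, Qs_zero, plusMap, As_zero,
    Bs_zero]
  simp only [mul_add, add_mul, mul_assoc]
  abel

lemma Bs_succ_eq_conj_inv (hf : Admissible f) (hQ : Q.PosDef) {k : ℕ} (hW : (Q - Bs f A Q k).PosDef)
    (hL : (Qs f A Q 0 - Bs f A Q k).PosDef) :
    Bs f A Q (k + 1) = f A * (f Q - A * (Q - Bs f A Q k)⁻¹ * Aᴴ)⁻¹ * (f A)ᴴ := by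
  have hL' : Qs f A Q 0 - Bs f A Q k = Q - Bs f A Q k - Aᴴ * (f Q)⁻¹ * A := by
    rw [Qs_zero, plusMap]
    abel
  have hinv := sub_mul_inv_mul_inv_eq_add (hf.posDef hQ).isUnit hW.isUnit (U := A) (V := Aᴴ)
    (hL' ▸ hL.isUnit)
  rw [hinv, ← hL', Bs_succ, conjTranspose_As_zero hf hQ, As_zero, Bs_zero]
  simp only [mul_add, add_mul, mul_assoc]

lemma posDef_sub_conj_inv_of_posDef_sub (hf : Admissible f) (hXS : XS.PosDef)
    (hC : XS ≤ plusMap f A Q XS) {Y : Mat n} (hY : (XS - Y).PosDef) :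
    (XS - f A * (f Q - A * (Q - Y)⁻¹ * Aᴴ)⁻¹ * (f A)ᴴ).PosDef := by
  have hW : (Q - Y).PosDef := hY.sub_of_le (le_of_le_plusMap hf hXS hC)
  have hWA : (Q - Y - Aᴴ * (f XS)⁻¹ * A).PosDef := by
    simpa only [plusMap, sub_right_comm] using hY.sub_of_le hC
  have h1 : (f XS - A * (Q - Y)⁻¹ * Aᴴ).PosDef :=
    (hf.posDef hXS).sub_mul_inv_mul_conjTranspose hW (by simpa using hWA)
  have h2 : (f Q - A * (Q - Y)⁻¹ * Aᴴ - (f A)ᴴ * XS⁻¹ * f A).PosDef := by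
    simpa only [sub_right_comm] using h1.sub_of_le (map_le_of_le_plusMap hf hC)
  have hS : (f Q - A * (Q - Y)⁻¹ * Aᴴ).PosDef :=
    h2.of_le (sub_le_self _ (star_left_conjugate_nonneg hXS.inv.posSemidef.nonneg (f A)))
  exact hXS.sub_mul_inv_mul_conjTranspose hS h2

lemma sub_Bs_zero_posDef (hf : Admissible f) (hQ : Q.PosDef) (hXS : XS.PosDef)
    (hC : XS ≤ plusMap f A Q XS) : (XS - Bs f A Q 0).PosDef :=
  hXS.sub_mul_inv_mul_conjTranspose (hf.posDef hQ)
    ((hf.posDef hXS).of_le (map_le_of_le_plusMap hf hC))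

lemma sub_Bs_posDef (hf : Admissible f) (hQ : Q.PosDef) (hXS : XS.PosDef)
    (hC : XS ≤ plusMap f A Q XS) (k : ℕ) : (XS - Bs f A Q k).PosDef := by
  induction k with
  | zero => exact sub_Bs_zero_posDef hf hQ hXS hC
  | succ k ih =>
    have hXSQ := le_of_le_plusMap hf hXS hC
    rw [Bs_succ_eq_conj_inv hf hQ (ih.sub_of_le hXSQ)
      (ih.sub_of_le (hC.trans (plusMap_mono hf hXS hXSQ)))]
    exact posDef_sub_conj_inv_of_posDef_sub hf hXS hC ih

lemma Qs_zero_sub_Bs_posDef (hf : Admissible f) (hQ : Q.PosDef) (hXS : XS.PosDef)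
    (hC : XS ≤ plusMap f A Q XS) (k : ℕ) : (Qs f A Q 0 - Bs f A Q k).PosDef :=
  (sub_Bs_posDef hf hQ hXS hC k).sub_of_le (le_iterate_plusMap hf hXS hC 1)

lemma Bs_mono (hf : Admissible f) (hQ : Q.PosDef) (hXS : XS.PosDef)
    (hC : XS ≤ plusMap f A Q XS) : Monotone (Bs f A Q) := by
  refine monotone_nat_of_le_succ fun k => ?_
  induction k with
  | zero =>
    exact le_add_of_nonneg_right (star_right_conjugate_nonneg
      (Qs_zero_sub_Bs_posDef hf hQ hXS hC 0).inv.posSemidef.nonneg _)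
  | succ k ih =>
    rw [Bs_succ, Bs_succ (k + 1)]
    exact add_le_add_right (star_right_conjugate_le_conjugate (inv_le_inv_of_le
      (Qs_zero_sub_Bs_posDef hf hQ hXS hC (k + 1)) (sub_le_sub_left ih _)) _) _

lemma Bs_nonneg (hf : Admissible f) (hQ : Q.PosDef) (hXS : XS.PosDef)
    (hC : XS ≤ plusMap f A Q XS) (k : ℕ) : 0 ≤ Bs f A Q k :=
  (star_right_conjugate_nonneg (hf.posDef hQ).inv.posSemidef.nonneg (f A)).trans
    (Bs_mono hf hQ hXS hC (Nat.zero_le k))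

lemma Qs_succ_sub_conj_inv {m : ℕ} (hL : (Qs f A Q 0 - Bs f A Q m).PosDef) {D : Mat n}
    (hD : D.PosDef)
    (hD' : (D - As f A Q 0 * (Qs f A Q 0 - Bs f A Q m)⁻¹ * (As f A Q 0)ᴴ).PosDef) :
    Qs f A Q (m + 1) - (As f A Q (m + 1))ᴴ
        * (D - As f A Q 0 * (Qs f A Q 0 - Bs f A Q m)⁻¹ * (As f A Q 0)ᴴ)⁻¹ * As f A Q (m + 1)
      = Qs f A Q m - (As f A Q m)ᴴ
        * (Qs f A Q 0 - Bs f A Q m - (As f A Q 0)ᴴ * D⁻¹ * As f A Q 0)⁻¹ * As f A Q m := by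
  have hinv := sub_mul_inv_mul_inv_eq_add hL.isUnit hD.isUnit (U := (As f A Q 0)ᴴ)
    (V := As f A Q 0) hD'.isUnit
  rw [hinv, Qs_succ, As_succ, conjTranspose_mul, conjTranspose_mul, hL.inv.isHermitian]
  simp only [mul_add, add_mul, mul_assoc]
  abel

lemma iterate_plusMap_two_mul_add_one (hf : Admissible f) (hQ : Q.PosDef) (hXS : XS.PosDef)
    (hC : XS ≤ plusMap f A Q XS) (j : ℕ) :
    (plusMap f A Q)^[2 * (j + 1) + 1] Q
      = Qs f A Q 0 - (As f A Q 0)ᴴ * ((plusMap f A Q)^[2 * j + 1] Q - Bs f A Q 0)⁻¹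
          * As f A Q 0 := by
  have hle := le_iterate_plusMap hf hXS hC (2 * j + 1)
  rw [show 2 * (j + 1) + 1 = 2 * j + 1 + 1 + 1 by ring, Function.iterate_succ_apply',
    Function.iterate_succ_apply']
  exact plusMap_plusMap hf hQ (hXS.of_le hle) ((sub_Bs_zero_posDef hf hQ hXS hC).sub_of_le hle)

lemma Qs_add_succ (hf : Admissible f) (hQ : Q.PosDef) (hXS : XS.PosDef)
    (hC : XS ≤ plusMap f A Q XS) (j m : ℕ) :
    Qs f A Q (j + m + 1) = Qs f A Q m - (As f A Q m)ᴴ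
      * ((plusMap f A Q)^[2 * j + 1] Q - Bs f A Q m)⁻¹ * As f A Q m := by
  induction j generalizing m with
  | zero =>
    rw [Nat.mul_zero, Nat.zero_add, Nat.zero_add, Function.iterate_one]
    exact Qs_succ m
  | succ j ih =>
    set U := (plusMap f A Q)^[2 * j + 1] Q
    have hU := le_iterate_plusMap hf hXS hC (2 * j + 1)
    have hUB : U - Bs f A Q (m + 1)
        = U - Bs f A Q 0 - As f A Q 0 * (Qs f A Q 0 - Bs f A Q m)⁻¹ * (As f A Q 0)ᴴ := by
      rw [Bs_succ]
      abel
    rw [show j + 1 + m + 1 = j + (m + 1) + 1 by ring, ih, hUB,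
      Qs_succ_sub_conj_inv (Qs_zero_sub_Bs_posDef hf hQ hXS hC m)
        ((sub_Bs_posDef hf hQ hXS hC 0).sub_of_le hU)
        (hUB ▸ (sub_Bs_posDef hf hQ hXS hC (m + 1)).sub_of_le hU),
      iterate_plusMap_two_mul_add_one hf hQ hXS hC, sub_right_comm]

lemma Qs_eq_iterate (hf : Admissible f) (hQ : Q.PosDef) (hXS : XS.PosDef)
    (hC : XS ≤ plusMap f A Q XS) (k : ℕ) : Qs f A Q k = (plusMap f A Q)^[2 * k + 1] Q := by
  cases k with
  | zero => rfl
  | succ k =>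
    rw [iterate_plusMap_two_mul_add_one hf hQ hXS hC, ← Qs_add_succ hf hQ hXS hC k 0]

end Sequences

/-- under Condition (C) with witness `XS`, the sequences for the plus-sign
equation are well defined (`Q^{(1)} - B^{(k)}` is positive definite for all `k`), the chain
`Q ≥ Q^{(k)} ≥ Q^{(k+1)} ≥ X_S > B^{(k+1)} ≥ B^{(k)} ≥ 0` holds, and
`Q^{(k)} ≥ Q - Aᴴ f(Q^{(k)})⁻¹ A`.  (Indices here are the paper's shifted by one.) -/
theorem stmt_4 {n : ℕ} (f : Mat n → Mat n) (hf : Admissible f)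
    (A Q XS : Mat n) (hQ : Q.PosDef)
    (hXS : XS.PosDef) (hXSle : (Q - Aᴴ * (f XS)⁻¹ * A - XS).PosSemidef) :
    (∀ k, (Qs f A Q 0 - Bs f A Q k).PosDef) ∧
    (∀ k, (Q - Qs f A Q k).PosSemidef ∧
      (Qs f A Q k - Qs f A Q (k + 1)).PosSemidef ∧
      (Qs f A Q (k + 1) - XS).PosSemidef ∧
      (XS - Bs f A Q (k + 1)).PosDef ∧
      (Bs f A Q (k + 1) - Bs f A Q k).PosSemidef ∧
      (Bs f A Q k).PosSemidef) ∧
    (∀ k, (Qs f A Q k - (Q - Aᴴ * (f (Qs f A Q k))⁻¹ * A)).PosSemidef) := by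
  have hC : XS ≤ plusMap f A Q XS := hXSle
  have hanti := antitone_iterate_plusMap hf hXS hC
  have hQs := Qs_eq_iterate hf hQ hXS hC
  refine ⟨Qs_zero_sub_Bs_posDef hf hQ hXS hC, fun k => ⟨?_, ?_, ?_,
    sub_Bs_posDef hf hQ hXS hC (k + 1), Bs_mono hf hQ hXS hC k.le_succ,
    (Bs_nonneg hf hQ hXS hC k).posSemidef⟩, fun k => ?_⟩
  · rw [hQs]
    exact hanti (Nat.zero_le _)
  · rw [hQs, hQs]
    exact hanti (by omega)
  · rw [hQs]
    exact le_iterate_plusMap hf hXS hC _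
  · change plusMap f A Q (Qs f A Q k) ≤ Qs f A Q k
    rw [hQs, ← Function.iterate_succ_apply' (plusMap f A Q)]
    exact hanti (Nat.le_succ _)
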